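/- Completeness of the closure type system on states: if s is a reachable Space KAM state and there is a run ρ : s →* s_f to a final state, then there is a derivation ⊢ s : ⋆. -/

import Mathlib

/-! ## Lambda terms, substitution, weak head reduction -/

inductive Tm : Type
  | var : ℕ → Tm
  | lam : ℕ → Tm → Tm
  | app : Tm → Tm → Tm
deriving DecidableEq

def subst (x : ℕ) (u : Tm) : Tm → Tm
  | .var y => if y = x then u else .var y
  | .lam y t => if y = x then .lam y t else .lam y (subst x u t)
  | .app t s => .app (subst x u t) (subst x u s)

def fv : Tm → Finset ℕ
  | .var x => {x}
  | .lam x t => fv t \ {x}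
  | .app t u => fv t ∪ fv u

/-- Weak head reduction: `(λx.t) u r₁ … r_h →wh t[x:=u] r₁ … r_h`. -/
inductive Wh : Tm → Tm → Prop
  | beta (x : ℕ) (t u : Tm) : Wh (.app (.lam x t) u) (subst x u t)
  | appL {t t' : Tm} (u : Tm) : Wh t t' → Wh (.app t u) (.app t' u)

/-! ## Space KAM -/

mutual
inductive Clo : Type
  | mk : Tm → Env → Clo
inductive Env : Type
  | nil : Env
  | cons : ℕ → Clo → Env → Env
end

def Env.lookup : Env → ℕ → Option Clo
  | .nil, _ => none
  | .cons y c e, x => if x = y then some c else e.lookup x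

def Env.dom : Env → Finset ℕ
  | .nil => ∅
  | .cons y _ e => insert y e.dom

/-- `e.restrict V` is the restriction `e|_V` of `e` to the variables in `V`. -/
def Env.restrict : Env → Finset ℕ → Env
  | .nil, _ => .nil
  | .cons y c e, V => if y ∈ V then .cons y c (e.restrict V) else e.restrict V

structure State : Type where
  tm : Tm
  env : Env
  stk : List Clo

/-- Space KAM transitions (with unchaining and eager garbage collection). -/
inductive SpKAM : State → State → Prop
  | sea_v {t : Tm} {x : ℕ} {e : Env} {S : List Clo} {c : Clo} :
      e.lookup x = some c →
      SpKAM ⟨.app t (.var x), e, S⟩ ⟨t, e.restrict (fv t), c :: S⟩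
  | sea_nv {t u : Tm} {e : Env} {S : List Clo} :
      (∀ y, u ≠ .var y) →
      SpKAM ⟨.app t u, e, S⟩ ⟨t, e.restrict (fv t), Clo.mk u (e.restrict (fv u)) :: S⟩
  | beta_w {x : ℕ} {t : Tm} {e : Env} {c : Clo} {S : List Clo} :
      x ∉ fv t →
      SpKAM ⟨.lam x t, e, c :: S⟩ ⟨t, e, S⟩
  | beta_nw {x : ℕ} {t : Tm} {e : Env} {c : Clo} {S : List Clo} :
      x ∈ fv t →
      SpKAM ⟨.lam x t, e, c :: S⟩ ⟨t, .cons x c e, S⟩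
  | sub {x : ℕ} {e e' : Env} {u : Tm} {S : List Clo} :
      e.lookup x = some (Clo.mk u e') →
      SpKAM ⟨.var x, e, S⟩ ⟨u, e', S⟩

/-- A state is reachable if it is the target of a run from an initial state
`(t₀, ε, ε)` with `t₀` closed. -/
def Reachable (s : State) : Prop :=
  ∃ t₀ : Tm, fv t₀ = ∅ ∧ Relation.ReflTransGen SpKAM ⟨t₀, .nil, []⟩ s

mutual
def Clo.closures : Clo → List Clo
  | .mk t e => .mk t e :: e.closures
def Env.closures : Env → List Clo
  | .nil => []
  | .cons _ c e => c.closures ++ e.closures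
end

/-- All closures occurring in a state (including the active closure). -/
def State.closures (s : State) : List Clo :=
  (Clo.mk s.tm s.env).closures ++ (s.stk.map Clo.closures).flatten

mutual
def Clo.size : Clo → ℕ
  | .mk _ e => 1 + e.size
def Env.size : Env → ℕ
  | .nil => 0
  | .cons _ c e => c.size + e.size
end

def State.size (s : State) : ℕ := s.env.size + (s.stk.map Clo.size).sum

def Clo.env : Clo → Env
  | .mk _ e => e

/-- Final states: no transition applies. -/
def Final (s : State) : Prop := ∀ s', ¬ SpKAM s s'

/-- Runs together with their abstract space consumption (the maximum of the
sizes of the traversed states). -/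
inductive RunSp : State → State → ℕ → Prop
  | refl (s : State) : RunSp s s s.size
  | step {s s' s'' : State} {m : ℕ} :
      SpKAM s s' → RunSp s' s'' m → RunSp s s'' (max s.size m)

/-! ## Closure types -/

mutual
inductive LTy : Type
  | star : LTy
  | arr : MTy → LTy → LTy
inductive MTy : Type
  | mk : List LTy → ℕ → MTy
end

def MTy.idx : MTy → ℕ | .mk _ k => k

def MTy.union : MTy → MTy → MTy
  | .mk l k, .mk l' _ => .mk (l ++ l') k

def LTy.size : LTy → ℕ
  | .star => 0
  | .arr M A => M.idx + A.size

/-- Type contexts: finitely supported assignments of closure types to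
variables (outside the domain the default `[]^1` is assigned). -/
structure Ctx : Type where
  dom : Finset ℕ
  ty : ℕ → MTy
  off_dom : ∀ x ∉ dom, ty x = MTy.mk [] 1

def Ctx.size (Γ : Ctx) : ℕ := Γ.dom.sum fun x => (Γ.ty x).idx

def Ctx.Dry (Γ : Ctx) : Prop :=
  ∀ x ∈ Γ.dom, ∃ k, 0 < k ∧ Γ.ty x = MTy.mk [] k

def Ctx.Summable (Γ Δ : Ctx) : Prop :=
  ∀ x ∈ Γ.dom ∩ Δ.dom, (Γ.ty x).idx = (Δ.ty x).idx

def Ctx.empty : Ctx := ⟨∅, fun _ => MTy.mk [] 1, fun _ _ => rfl⟩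

def Ctx.single (x : ℕ) (M : MTy) : Ctx :=
  ⟨{x}, fun y => if y = x then M else MTy.mk [] 1, by
    intro y hy
    simp only [Finset.mem_singleton] at hy
    simp [hy]⟩

def Ctx.extend (Γ : Ctx) (x : ℕ) (M : MTy) : Ctx :=
  ⟨insert x Γ.dom, Function.update Γ.ty x M, by
    intro y hy
    simp only [Finset.mem_insert, not_or] at hy
    rw [Function.update_of_ne hy.1]
    exact Γ.off_dom y hy.2⟩

def Ctx.union (Γ Δ : Ctx) : Ctx :=
  ⟨Γ.dom ∪ Δ.dom,
   fun x =>
     if x ∈ Γ.dom then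
       (if x ∈ Δ.dom then (Γ.ty x).union (Δ.ty x) else Γ.ty x)
     else Δ.ty x,
   by
    intro x hx
    simp only [Finset.mem_union, not_or] at hx
    simp [hx.1, hx.2, Δ.off_dom x hx.2]⟩

/-! ## The weighted closure type system (space weights), with derivation
sizes (counting all rules except T-many, T-none, T-cl, T-env). -/

mutual
/-- `TJ Γ t A w n`: the judgment `Γ ⊢ t : A` is derivable with weight `w`
by a derivation of size `n`. -/
inductive TJ : Ctx → Tm → LTy → ℕ → ℕ → Prop
  | var {x : ℕ} {A : LTy} {k : ℕ} : 0 < k →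
      TJ (Ctx.single x (.mk [A] k)) (.var x) A (k + A.size) 1
  | lamStar {Γ : Ctx} {x : ℕ} {t : Tm} :
      Γ.Dry → Γ.dom = fv (.lam x t) →
      TJ Γ (.lam x t) .star Γ.size 1
  | lam1 {Γ : Ctx} {x : ℕ} {M : MTy} {t : Tm} {A : LTy} {w n : ℕ} :
      x ∉ Γ.dom →
      TJ (Γ.extend x M) t A w n →
      TJ Γ (.lam x t) (.arr M A) w (n + 1)
  | lam2 {Γ : Ctx} {x : ℕ} {t : Tm} {A : LTy} {k w n : ℕ} :
      x ∉ Γ.dom → 0 < k →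
      TJ Γ t A w n →
      TJ Γ (.lam x t) (.arr (.mk [] k) A) (max w (Γ.size + A.size + k)) (n + 1)
  | app1 {Γ Δ : Ctx} {t u : Tm} {M : MTy} {A : LTy} {w v n m : ℕ} :
      Γ.Summable Δ →
      TJ Γ t (.arr M A) w n → MJ Δ u M v m →
      TJ (Γ.union Δ) (.app t u) A (max w v) (n + m + 1)
  | app2 {Γ : Ctx} {x : ℕ} {t : Tm} {M : MTy} {A : LTy} {w n : ℕ} :
      Γ.Summable (Ctx.single x M) →
      TJ Γ t (.arr M A) w n →
      TJ (Γ.union (Ctx.single x M)) (.app t (.var x)) A w (n + 1)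

/-- `MJ Γ t 𝒜 w n`: multiset judgment (rules T-none / T-many). -/
inductive MJ : Ctx → Tm → MTy → ℕ → ℕ → Prop
  | none {Γ : Ctx} {t : Tm} :
      Γ.Dry → Γ.dom = fv t →
      MJ Γ t (.mk [] (1 + Γ.size)) 0 0
  | one {Γ : Ctx} {t : Tm} {A : LTy} {w n : ℕ} :
      TJ Γ t A w n →
      MJ Γ t (.mk [A] (1 + Γ.size)) w n
  | cons {Γ Δ : Ctx} {t : Tm} {A : LTy} {l : List LTy} {w v n m : ℕ} :
      Γ.Summable Δ →
      TJ Γ t A w n → MJ Δ t (.mk l (1 + Δ.size)) v m →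
      MJ (Γ.union Δ) t (.mk (A :: l) (1 + (Γ.union Δ).size)) (max w v) (n + m)
end

/-! ## Typing of machine components -/

mutual
/-- `EJ e Γ w n`: rule T-env, typing an environment with a type context. -/
inductive EJ : Env → Ctx → ℕ → ℕ → Prop
  | nil : EJ .nil Ctx.empty 0 0
  | cons {e : Env} {Γ : Ctx} {x : ℕ} {c : Clo} {M : MTy} {w v n m : ℕ} :
      x ∉ Γ.dom →
      CJ c M w n → EJ e Γ v m →
      EJ (.cons x c e) (Γ.extend x M) (max w v) (n + m)

/-- `CJ c 𝒜 w n`: rule T-cl, typing a closure with a closure type. -/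
inductive CJ : Clo → MTy → ℕ → ℕ → Prop
  | mk {t : Tm} {e : Env} {Γ : Ctx} {M : MTy} {w v n m : ℕ} :
      EJ e Γ w n → MJ Γ t M v m →
      CJ (.mk t e) M (max w v) (n + m)
end

/-- Typing of stacks against the arrow structure of a linear type ending in `⋆`. -/
inductive SJ : List Clo → LTy → ℕ → ℕ → Prop
  | nil : SJ [] .star 0 0
  | cons {c : Clo} {M : MTy} {S : List Clo} {A : LTy} {w v n m : ℕ} :
      CJ c M w n → SJ S A v m →
      SJ (c :: S) (.arr M A) (max w v) (n + m)

/-- `StJ s w n`: rule T-st, typing a state with `⋆`. -/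
inductive StJ : State → ℕ → ℕ → Prop
  | mk {t : Tm} {e : Env} {S : List Clo} {Γ : Ctx} {A : LTy} {w u v n m p : ℕ} :
      TJ Γ t A w n → EJ e Γ u m → SJ S A v p →
      StJ ⟨t, e, S⟩ (max w (max u v)) (n + m + p)


/-! ### Auxiliary lemmas -/

theorem MTy.idx_union (M N : MTy) : (M.union N).idx = M.idx := by
  cases M; cases N; rfl

theorem MTy.union_assoc (M N P : MTy) : (M.union N).union P = M.union (N.union P) := by
  cases M; cases N; cases P; simp [MTy.union]

theorem Ctx.ext' {Γ Δ : Ctx} (h1 : Γ.dom = Δ.dom) (h2 : Γ.ty = Δ.ty) : Γ = Δ := by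
  cases Γ; cases Δ; simp_all

theorem Ctx.dom_union (Γ Δ : Ctx) : (Γ.union Δ).dom = Γ.dom ∪ Δ.dom := rfl
theorem Ctx.dom_extend (Γ : Ctx) (x : ℕ) (M : MTy) :
    (Γ.extend x M).dom = insert x Γ.dom := rfl
theorem Ctx.dom_single (x : ℕ) (M : MTy) : (Ctx.single x M).dom = {x} := rfl
theorem Ctx.dom_empty : Ctx.empty.dom = ∅ := rfl

theorem Ctx.ty_union (Γ Δ : Ctx) (x : ℕ) :
    (Γ.union Δ).ty x =
      if x ∈ Γ.dom then
        (if x ∈ Δ.dom then (Γ.ty x).union (Δ.ty x) else Γ.ty x)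
      else Δ.ty x := rfl

theorem Ctx.idx_union_ty (Γ Δ : Ctx) (x : ℕ) :
    ((Γ.union Δ).ty x).idx = if x ∈ Γ.dom then (Γ.ty x).idx else (Δ.ty x).idx := by
  rw [Ctx.ty_union]
  by_cases h1 : x ∈ Γ.dom <;> by_cases h2 : x ∈ Δ.dom <;> simp [h1, h2, MTy.idx_union]

theorem Ctx.size_empty : Ctx.empty.size = 0 := rfl

theorem Ctx.size_extend {Γ : Ctx} {x : ℕ} {M : MTy} (h : x ∉ Γ.dom) :
    (Γ.extend x M).size = M.idx + Γ.size := by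
  unfold Ctx.size
  show (insert x Γ.dom).sum (fun y => ((Function.update Γ.ty x M) y).idx) = _
  rw [Finset.sum_insert h, Function.update_self]
  congr 1
  apply Finset.sum_congr rfl
  intro y hy
  rw [Function.update_of_ne (by rintro rfl; exact h hy)]

theorem Ctx.size_single (x : ℕ) (M : MTy) : (Ctx.single x M).size = M.idx := by
  unfold Ctx.size
  simp [Ctx.single]

theorem Ctx.size_union_of_subset {Γ Δ : Ctx} (h : Δ.dom ⊆ Γ.dom) :
    (Γ.union Δ).size = Γ.size := by
  unfold Ctx.size
  rw [Ctx.dom_union, Finset.union_eq_left.mpr h]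
  apply Finset.sum_congr rfl
  intro y hy
  rw [Ctx.idx_union_ty, if_pos hy]

theorem Ctx.union_assoc (Γ Δ Θ : Ctx) :
    (Γ.union Δ).union Θ = Γ.union (Δ.union Θ) := by
  apply Ctx.ext'
  · simp [Ctx.dom_union, Finset.union_assoc]
  · funext x
    simp only [Ctx.ty_union, Ctx.dom_union, Finset.mem_union]
    by_cases h1 : x ∈ Γ.dom <;> by_cases h2 : x ∈ Δ.dom <;> by_cases h3 : x ∈ Θ.dom <;>
      simp [h1, h2, h3, MTy.union_assoc]

theorem Ctx.empty_union (Γ : Ctx) : Ctx.empty.union Γ = Γ := by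
  apply Ctx.ext'
  · simp [Ctx.dom_union, Ctx.dom_empty]
  · funext x
    rw [Ctx.ty_union]
    simp [Ctx.dom_empty]

theorem Ctx.empty_extend (x : ℕ) (M : MTy) :
    Ctx.empty.extend x M = Ctx.single x M := by
  apply Ctx.ext'
  · simp [Ctx.dom_extend, Ctx.dom_single, Ctx.dom_empty]
  · funext y
    show Function.update Ctx.empty.ty x M y = _
    by_cases hy : y = x
    · subst hy; simp [Ctx.single]
    · rw [Function.update_of_ne hy]; simp [Ctx.single, hy, Ctx.empty]

theorem Ctx.extend_union_extend {Γ Δ : Ctx} {x : ℕ} {M N : MTy}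
    (h1 : x ∉ Γ.dom) (h2 : x ∉ Δ.dom) :
    (Γ.extend x M).union (Δ.extend x N) = (Γ.union Δ).extend x (M.union N) := by
  apply Ctx.ext'
  · simp only [Ctx.dom_union, Ctx.dom_extend]
    ext y; simp only [Finset.mem_union, Finset.mem_insert]; tauto
  · funext y
    rw [Ctx.ty_union]
    show _ = Function.update (Γ.union Δ).ty x (M.union N) y
    by_cases hy : y = x
    · subst hy
      simp [Ctx.dom_extend, Ctx.extend, Function.update_self]
    · rw [Function.update_of_ne hy, Ctx.ty_union]
      simp only [Ctx.dom_extend, Finset.mem_insert, hy, false_or]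
      show (if y ∈ Γ.dom then (if y ∈ Δ.dom
          then (Function.update Γ.ty x M y).union (Function.update Δ.ty x N y)
          else Function.update Γ.ty x M y) else Function.update Δ.ty x N y) = _
      rw [Function.update_of_ne hy, Function.update_of_ne hy]

theorem Ctx.extend_union_left {Γ Δ : Ctx} {x : ℕ} {M : MTy}
    (h1 : x ∉ Γ.dom) (h2 : x ∉ Δ.dom) :
    (Γ.extend x M).union Δ = (Γ.union Δ).extend x M := by
  apply Ctx.ext'
  · simp only [Ctx.dom_union, Ctx.dom_extend]
    ext y; simp only [Finset.mem_union, Finset.mem_insert]; tauto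
  · funext y
    rw [Ctx.ty_union]
    show _ = Function.update (Γ.union Δ).ty x M y
    by_cases hy : y = x
    · subst hy
      simp [Ctx.dom_extend, Ctx.extend, Function.update_self, h2]
    · rw [Function.update_of_ne hy, Ctx.ty_union]
      simp only [Ctx.dom_extend, Finset.mem_insert, hy, false_or]
      show (if y ∈ Γ.dom then (if y ∈ Δ.dom
          then (Function.update Γ.ty x M y).union (Δ.ty y)
          else Function.update Γ.ty x M y) else Δ.ty y) = _
      rw [Function.update_of_ne hy]

theorem Ctx.union_extend_right {Γ Δ : Ctx} {x : ℕ} {M : MTy}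
    (h1 : x ∉ Γ.dom) (h2 : x ∉ Δ.dom) :
    Γ.union (Δ.extend x M) = (Γ.union Δ).extend x M := by
  apply Ctx.ext'
  · simp only [Ctx.dom_union, Ctx.dom_extend]
    ext y; simp only [Finset.mem_union, Finset.mem_insert]; tauto
  · funext y
    rw [Ctx.ty_union]
    show _ = Function.update (Γ.union Δ).ty x M y
    by_cases hy : y = x
    · subst hy
      simp [Ctx.dom_extend, Ctx.extend, Function.update_self, h1]
    · rw [Function.update_of_ne hy, Ctx.ty_union]
      simp only [Ctx.dom_extend, Finset.mem_insert, hy, false_or]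
      show (if y ∈ Γ.dom then (if y ∈ Δ.dom
          then (Γ.ty y).union (Function.update Δ.ty x M y)
          else Γ.ty y) else Function.update Δ.ty x M y) = _
      rw [Function.update_of_ne hy]

theorem Ctx.dry_union_eq {Γ Δ : Ctx} (hd : Γ.Dry) (hdom : Γ.dom = Δ.dom)
    (hs : Γ.Summable Δ) : Γ.union Δ = Δ := by
  apply Ctx.ext'
  · simp [Ctx.dom_union, hdom]
  · funext x
    rw [Ctx.ty_union]
    by_cases h1 : x ∈ Γ.dom
    · have h2 : x ∈ Δ.dom := hdom ▸ h1
      obtain ⟨k, hk, hty⟩ := hd x h1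
      have hidx := hs x (Finset.mem_inter.mpr ⟨h1, h2⟩)
      rw [if_pos h1, if_pos h2, hty]
      rcases hΔ : Δ.ty x with ⟨l, k'⟩
      rw [hΔ] at hidx
      rw [hty] at hidx
      simp [MTy.idx] at hidx
      simp [MTy.union, hidx]
    · rw [if_neg h1]



/-! ### Environment lemmas -/

theorem Env.inductionOn {motive : Env → Prop} (nil : motive .nil)
    (cons : ∀ x c e, motive e → motive (.cons x c e)) : ∀ e, motive e
  | .nil => nil
  | .cons x c e => cons x c e (Env.inductionOn nil cons e)

theorem Env.dom_restrict (e : Env) (V : Finset ℕ) :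
    (e.restrict V).dom = e.dom ∩ V := by
  induction e using Env.inductionOn with
  | nil => simp [Env.restrict, Env.dom]
  | cons y c e ih =>
    by_cases hy : y ∈ V
    · simp [Env.restrict, hy, Env.dom, ih, Finset.insert_inter_of_mem hy]
    · simp [Env.restrict, hy, Env.dom, ih, Finset.insert_inter_of_notMem hy]

theorem Env.lookup_restrict {e : Env} {V : Finset ℕ} {x : ℕ} (hx : x ∈ V) :
    (e.restrict V).lookup x = e.lookup x := by
  induction e using Env.inductionOn with
  | nil => rfl
  | cons y c e ih =>
    by_cases hy : y ∈ V
    · simp [Env.restrict, hy, Env.lookup, ih]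
    · have : x ≠ y := by rintro rfl; exact hy hx
      simp [Env.restrict, hy, Env.lookup, this, ih]

theorem Env.restrict_eq_self {e : Env} {V : Finset ℕ} (h : e.dom ⊆ V) :
    e.restrict V = e := by
  induction e using Env.inductionOn with
  | nil => rfl
  | cons y c e ih =>
    have hy : y ∈ V := h (by simp [Env.dom])
    have he : e.dom ⊆ V := fun z hz => h (by simp [Env.dom, hz])
    simp [Env.restrict, hy, ih he]

theorem Env.restrict_eq_nil {e : Env} {V : Finset ℕ} (h : ∀ x ∈ e.dom, x ∉ V) :
    e.restrict V = .nil := by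
  induction e using Env.inductionOn with
  | nil => rfl
  | cons y c e ih =>
    have hy : y ∉ V := h y (by simp [Env.dom])
    have he : ∀ x ∈ e.dom, x ∉ V := fun z hz => h z (by simp [Env.dom, hz])
    simp [Env.restrict, hy, ih he]

theorem Env.lookup_of_mem_dom {e : Env} {x : ℕ} (h : x ∈ e.dom) :
    ∃ c, e.lookup x = some c := by
  induction e using Env.inductionOn with
  | nil => simp [Env.dom] at h
  | cons y c e ih =>
    by_cases hxy : x = y
    · exact ⟨c, by simp [Env.lookup, hxy]⟩
    · simp [Env.dom, hxy] at h
      obtain ⟨c', hc'⟩ := ih h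
      exact ⟨c', by simp [Env.lookup, hxy, hc']⟩

theorem Env.mem_dom_of_lookup {e : Env} {x : ℕ} {c : Clo} (h : e.lookup x = some c) :
    x ∈ e.dom := by
  induction e using Env.inductionOn with
  | nil => simp [Env.lookup] at h
  | cons y c' e ih =>
    by_cases hxy : x = y
    · simp [Env.dom, hxy]
    · simp [Env.lookup, hxy] at h
      simp [Env.dom, ih h]

/-! ### Well-formed closures, environments and states -/

mutual
def Clo.WF : Clo → Prop
  | .mk t e => e.WF ∧ e.dom = fv t
def Env.WF : Env → Prop
  | .nil => True
  | .cons x c e => x ∉ e.dom ∧ c.WF ∧ e.WF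
end

def State.WF (s : State) : Prop :=
  s.env.WF ∧ s.env.dom = fv s.tm ∧ ∀ c ∈ s.stk, c.WF

theorem Env.WF.restrict {e : Env} (h : e.WF) (V : Finset ℕ) : (e.restrict V).WF := by
  induction e using Env.inductionOn with
  | nil => simpa [Env.restrict] using h
  | cons y c e ih =>
    rw [Env.WF] at h
    obtain ⟨hy, hc, he⟩ := h
    by_cases hyV : y ∈ V
    · rw [Env.restrict, if_pos hyV, Env.WF]
      refine ⟨?_, hc, ih he⟩
      rw [Env.dom_restrict]
      simp only [Finset.mem_inter, not_and]
      intro hmem _; exact hy hmem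
    · rw [Env.restrict, if_neg hyV]
      exact ih he

theorem Env.WF.lookup {e : Env} (h : e.WF) {x : ℕ} {c : Clo}
    (hl : e.lookup x = some c) : c.WF := by
  induction e using Env.inductionOn with
  | nil => simp [Env.lookup] at hl
  | cons y c' e ih =>
    rw [Env.WF] at h
    by_cases hxy : x = y
    · simp [Env.lookup, hxy] at hl
      exact hl ▸ h.2.1
    · simp [Env.lookup, hxy] at hl
      exact ih h.2.2 hl

theorem Env.restrict_singleton {e : Env} (h : e.WF) {x : ℕ} {c : Clo}
    (hl : e.lookup x = some c) : e.restrict {x} = .cons x c .nil := by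
  induction e using Env.inductionOn with
  | nil => simp [Env.lookup] at hl
  | cons y c' e ih =>
    rw [Env.WF] at h
    by_cases hxy : x = y
    · subst hxy
      simp [Env.lookup] at hl
      subst hl
      rw [Env.restrict, if_pos (Finset.mem_singleton_self x)]
      rw [Env.restrict_eq_nil]
      intro z hz
      simp only [Finset.mem_singleton]
      rintro rfl; exact h.1 hz
    · simp [Env.lookup, hxy] at hl
      rw [Env.restrict, if_neg (by simp only [Finset.mem_singleton]; exact fun h' => hxy h'.symm)]
      exact ih h.2.2 hl

theorem WF_step {s s' : State} (h : SpKAM s s') (hwf : s.WF) : s'.WF := by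
  obtain ⟨hwe, hdom, hstk⟩ := hwf
  cases h with
  | @sea_v t x e S c hl =>
    refine ⟨hwe.restrict _, ?_, ?_⟩
    · rw [Env.dom_restrict]
      rw [show (⟨.app t (.var x), e, S⟩ : State).env = e from rfl] at hdom
      rw [hdom]
      simp only [fv]
      ext z
      simp only [Finset.mem_inter, Finset.mem_union, Finset.mem_singleton]
      tauto
    · intro c' hc'
      rw [List.mem_cons] at hc'
      rcases hc' with hc' | hc'
      · exact hc' ▸ hwe.lookup hl
      · exact hstk c' hc'
  | @sea_nv t u e S hnv =>
    rw [show (⟨.app t u, e, S⟩ : State).env = e from rfl] at hdom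
    refine ⟨hwe.restrict _, ?_, ?_⟩
    · rw [Env.dom_restrict, hdom]
      simp only [fv]
      ext z
      simp only [Finset.mem_inter, Finset.mem_union]
      tauto
    · intro c' hc'
      rw [List.mem_cons] at hc'
      rcases hc' with hc' | hc'
      · subst hc'
        refine ⟨hwe.restrict _, ?_⟩
        rw [Env.dom_restrict, hdom]
        simp only [fv]
        ext z
        simp only [Finset.mem_inter, Finset.mem_union]
        tauto
      · exact hstk c' hc'
  | @beta_w x t e c S hx =>
    refine ⟨hwe, ?_, fun c' hc' => hstk c' (by simp [hc'])⟩
    rw [show (⟨.lam x t, e, S.cons c⟩ : State).env = e from rfl] at hdom ⊢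
    rw [hdom]
    show fv (.lam x t) = fv t
    simp only [fv]
    ext z
    simp only [Finset.mem_sdiff, Finset.mem_singleton]
    exact ⟨fun h => h.1, fun h => ⟨h, fun hzx => hx (hzx ▸ h)⟩⟩
  | @beta_nw x t e c S hx =>
    rw [show (⟨.lam x t, e, S.cons c⟩ : State).env = e from rfl] at hdom
    have hxe : x ∉ e.dom := by rw [hdom]; simp [fv]
    refine ⟨?_, ?_, fun c' hc' => hstk c' (by simp [hc'])⟩
    · rw [Env.WF]
      exact ⟨hxe, hstk c (by simp), hwe⟩
    · show (Env.cons x c e).dom = fv t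
      rw [Env.dom, hdom]
      show insert x (fv (.lam x t)) = fv t
      simp only [fv]
      ext z
      simp only [Finset.mem_insert, Finset.mem_sdiff, Finset.mem_singleton]
      constructor
      · rintro (rfl | ⟨hz, _⟩); exact hx; exact hz
      · intro hz; by_cases hzx : z = x
        · exact Or.inl hzx
        · exact Or.inr ⟨hz, hzx⟩
  | @sub x e e' u S hl =>
    have hc := hwe.lookup hl
    rw [Clo.WF] at hc
    exact ⟨hc.1, hc.2, hstk⟩

theorem WF_reachable {s : State} (hr : Reachable s) : s.WF := by
  obtain ⟨t0, hfv, hrun⟩ := hr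
  induction hrun with
  | refl =>
    exact ⟨trivial, by simp [Env.dom, hfv], by simp⟩
  | tail _ hstep ih => exact WF_step hstep ih


/-! ### Lemmas on TJ/MJ -/

theorem MJ_idx {Γ : Ctx} {t : Tm} {l : List LTy} {k w n : ℕ}
    (h : MJ Γ t (.mk l k) w n) : k = 1 + Γ.size := by
  cases h <;> rfl

theorem TJ_size_pos {Γ : Ctx} {t : Tm} {A : LTy} {w n : ℕ} (h : TJ Γ t A w n) :
    1 ≤ n := by
  cases h <;> omega

theorem TJ_MJ_dom : ∀ n : ℕ,
    (∀ Γ t A w, TJ Γ t A w n → Γ.dom = fv t) ∧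
    (∀ Γ t M w, MJ Γ t M w n → Γ.dom = fv t) := by
  intro n
  induction n using Nat.strong_induction_on with
  | _ n ih =>
    have tj : ∀ Γ t A w, TJ Γ t A w n → Γ.dom = fv t := by
      intro Γ t A w h
      cases h with
      | var hk => rfl
      | lamStar hd hdom => exact hdom
      | @lam1 Γ x M t A w n0 hx h =>
        have hdom := (ih n0 (by omega)).1 _ _ _ _ h
        rw [Ctx.dom_extend] at hdom
        show Γ.dom = fv t \ {x}
        rw [← hdom]
        ext z
        simp only [Finset.mem_sdiff, Finset.mem_insert, Finset.mem_singleton]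
        constructor
        · intro hz; exact ⟨Or.inr hz, fun hzx => hx (hzx ▸ hz)⟩
        · rintro ⟨(rfl | hz), hzx⟩; exact absurd rfl hzx; exact hz
      | @lam2 Γ x t A k w n0 hx hk h =>
        have hdom := (ih n0 (by omega)).1 _ _ _ _ h
        show Γ.dom = fv t \ {x}
        rw [← hdom]
        ext z
        simp only [Finset.mem_sdiff, Finset.mem_singleton]
        exact ⟨fun hz => ⟨hz, fun hzx => hx (hzx ▸ hz)⟩, fun hz => hz.1⟩
      | @app1 Γ Δ t u M A w v n0 m hsum h1 h2 =>
        have e1 := (ih n0 (by have := TJ_size_pos h1; omega)).1 _ _ _ _ h1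
        have e2 : Δ.dom = fv u := by
          have h1pos := TJ_size_pos h1
          exact (ih m (by omega)).2 _ _ _ _ h2
        rw [Ctx.dom_union, e1, e2]; rfl
      | @app2 Γ x t M A w n0 hsum h =>
        have e1 := (ih n0 (by omega)).1 _ _ _ _ h
        rw [Ctx.dom_union, e1, Ctx.dom_single]; rfl
    refine ⟨tj, ?_⟩
    intro Γ t M w h
    cases h with
    | none hd hdom => exact hdom
    | one h => exact tj _ _ _ _ h
    | @cons Γ Δ t A l w v n0 m hsum h1 h2 =>
      have e1 : Γ.dom = fv t := by
        rcases Nat.eq_or_lt_of_le (Nat.le_add_right n0 m) with heq | hlt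
        · exact tj _ _ _ _ (heq ▸ h1)
        · exact (ih n0 hlt).1 _ _ _ _ h1
      have e2 : Δ.dom = fv t := by
        have := TJ_size_pos h1
        exact (ih m (by omega)).2 _ _ _ _ h2
      rw [Ctx.dom_union, e1, e2, Finset.union_self]

theorem TJ_dom {Γ : Ctx} {t : Tm} {A : LTy} {w n : ℕ} (h : TJ Γ t A w n) :
    Γ.dom = fv t := (TJ_MJ_dom n).1 _ _ _ _ h

theorem MJ_dom {Γ : Ctx} {t : Tm} {M : MTy} {w n : ℕ} (h : MJ Γ t M w n) :
    Γ.dom = fv t := (TJ_MJ_dom n).2 _ _ _ _ h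

/-- Merging two multi-type derivations for the same term. -/
theorem MJ_merge : ∀ n1 : ℕ, ∀ {Γ1 Γ2 : Ctx} {t : Tm} {l1 l2 : List LTy}
    {k1 k2 w1 w2 n2 : ℕ},
    MJ Γ1 t (.mk l1 k1) w1 n1 → MJ Γ2 t (.mk l2 k2) w2 n2 →
    Γ1.Summable Γ2 →
    ∃ w n, MJ (Γ1.union Γ2) t (.mk (l1 ++ l2) (1 + (Γ1.union Γ2).size)) w n := by
  intro n1
  induction n1 using Nat.strong_induction_on with
  | _ n1 ih =>
    intro Γ1 Γ2 t l1 l2 k1 k2 w1 w2 n2 h1 h2 hsum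
    have hdom1 := MJ_dom h1
    have hdom2 := MJ_dom h2
    cases h1 with
    | none hd hdom =>
      have heq : Γ1.union Γ2 = Γ2 := Ctx.dry_union_eq hd (hdom1.trans hdom2.symm) hsum
      rw [heq]
      have hk2 : k2 = 1 + Γ2.size := MJ_idx h2
      exact ⟨w2, n2, by rw [List.nil_append]; exact hk2 ▸ h2⟩
    | one htj =>
      have hk2 : k2 = 1 + Γ2.size := MJ_idx h2
      exact ⟨_, _, MJ.cons hsum htj (hk2 ▸ h2)⟩
    | @cons Γa Γb t A l w v na m hsumab hta hb =>
      have hdoma := TJ_dom hta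
      have hdomb := MJ_dom hb
      have idxab : ∀ x, x ∈ Γa.dom → ((Γa.union Γb).ty x).idx = (Γb.ty x).idx := by
        intro x hx
        rw [Ctx.idx_union_ty, if_pos hx]
        exact hsumab x (Finset.mem_inter.mpr ⟨hx, by rw [hdomb, ← hdoma]; exact hx⟩)
      have hsumb2 : Γb.Summable Γ2 := by
        intro x hx
        rw [Finset.mem_inter] at hx
        have hxa : x ∈ (Γa.union Γb).dom := by
          rw [Ctx.dom_union]; exact Finset.mem_union_right _ hx.1
        have := hsum x (Finset.mem_inter.mpr ⟨hxa, hx.2⟩)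
        rw [Ctx.idx_union_ty] at this
        by_cases hxa' : x ∈ Γa.dom
        · rw [if_pos hxa'] at this
          rw [← hsumab x (Finset.mem_inter.mpr ⟨hxa', hx.1⟩)]
          exact this
        · rwa [if_neg hxa'] at this
      have hmpos := TJ_size_pos hta
      obtain ⟨w', n', hmerge⟩ := ih m (by omega) hb h2 hsumb2
      have hsuma : Γa.Summable (Γb.union Γ2) := by
        intro x hx
        rw [Finset.mem_inter, Ctx.dom_union, Finset.mem_union] at hx
        have hxb : x ∈ Γb.dom := by rw [hdomb, ← hdoma]; exact hx.1
        rw [Ctx.idx_union_ty, if_pos hxb]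
        exact hsumab x (Finset.mem_inter.mpr ⟨hx.1, hxb⟩)
      have hres := MJ.cons hsuma hta hmerge
      rw [← Ctx.union_assoc] at hres
      exact ⟨_, _, by rw [show (A :: l) ++ l2 = A :: (l ++ l2) from rfl]; exact hres⟩


/-! ### Lemmas on EJ/CJ -/

theorem Clo.size_pos (c : Clo) : 0 < c.size := by
  cases c with
  | mk t e => rw [Clo.size]; omega

theorem EJ_dom {e : Env} : ∀ {Γ w n}, EJ e Γ w n → Γ.dom = e.dom := by
  induction e using Env.inductionOn with
  | nil =>
    intro Γ w n h
    cases h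
    rfl
  | cons y c e ih =>
    intro Γ w n h
    cases h with
    | cons hy hCJ hEJ =>
      rw [Ctx.dom_extend, ih hEJ]
      rfl

mutual
theorem CJ_idx : ∀ (c : Clo) {M : MTy} {w n : ℕ}, CJ c M w n → M.idx = c.size
  | .mk t e, M, w, n, h => by
    cases h with
    | mk hEJ hMJ =>
      cases M with
      | mk l k =>
        have h1 := MJ_idx hMJ
        have h2 := EJ_size e hEJ
        show k = Clo.size (.mk t e)
        rw [Clo.size, h1, h2]
theorem EJ_size : ∀ (e : Env) {Γ : Ctx} {w n : ℕ}, EJ e Γ w n → Γ.size = e.size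
  | .nil, Γ, w, n, h => by
    cases h
    exact Ctx.size_empty
  | .cons x c e, Γ, w, n, h => by
    cases h with
    | cons hx hCJ hEJ =>
      rw [Ctx.size_extend hx, CJ_idx c hCJ, EJ_size e hEJ]
      rfl
end

theorem EJ_lookup_idx {e : Env} : ∀ {Γ w n}, EJ e Γ w n →
    ∀ x ∈ e.dom, ∃ c, e.lookup x = some c ∧ (Γ.ty x).idx = c.size := by
  induction e using Env.inductionOn with
  | nil =>
    intro Γ w n h x hx
    simp [Env.dom] at hx
  | cons y c e ih =>
    intro Γ w n h x hx
    cases h with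
    | @cons _ Γ' _ _ M' w' v' n' m' hy hCJ hEJ =>
      by_cases hxy : x = y
      · subst hxy
        refine ⟨c, by simp [Env.lookup], ?_⟩
        show ((Function.update Γ'.ty x M') x).idx = c.size
        rw [Function.update_self]
        exact CJ_idx c hCJ
      · have hx' : x ∈ e.dom := by
          rcases Finset.mem_insert.mp hx with h' | h'
          · exact absurd h' hxy
          · exact h'
        obtain ⟨c', hl, hidx⟩ := ih hEJ x hx'
        refine ⟨c', by simp [Env.lookup, hxy, hl], ?_⟩
        show ((Function.update Γ'.ty y M') x).idx = c'.size
        rw [Function.update_of_ne hxy]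
        exact hidx

theorem EJ_summable {e : Env} {Γ Δ : Ctx} {w1 n1 w2 n2 : ℕ}
    (h1 : EJ e Γ w1 n1) (h2 : EJ e Δ w2 n2) : Γ.Summable Δ := by
  intro x hx
  rw [Finset.mem_inter, EJ_dom h1] at hx
  obtain ⟨c, hl, hidx⟩ := EJ_lookup_idx h1 x hx.1
  obtain ⟨c', hl', hidx'⟩ := EJ_lookup_idx h2 x hx.1
  rw [hl] at hl'
  cases hl'
  rw [hidx, hidx']

mutual
theorem CJ_merge : ∀ (c : Clo) {M1 w1 n1 M2 w2 n2},
    CJ c M1 w1 n1 → CJ c M2 w2 n2 → ∃ w n, CJ c (M1.union M2) w n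
  | .mk t e, M1, w1, n1, M2, w2, n2, h1, h2 => by
    cases h1 with
    | mk hE1 hM1 =>
      cases h2 with
      | mk hE2 hM2 =>
        cases M1 with
        | mk l1 k1 =>
          cases M2 with
          | mk l2 k2 =>
            rename_i Γ1 _ _ _ _ Γ2 _ _ _ _
            have hsum := EJ_summable hE1 hE2
            obtain ⟨w0, n0, hE⟩ := EJ_merge e hE1 hE2
            obtain ⟨w3, n3, hM⟩ := MJ_merge _ hM1 hM2 hsum
            have hsub : Γ2.dom ⊆ Γ1.dom := by
              rw [EJ_dom hE1, EJ_dom hE2]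
            have hsz : (Γ1.union Γ2).size = Γ1.size := Ctx.size_union_of_subset hsub
            have hk1 : k1 = 1 + Γ1.size := MJ_idx hM1
            have hres := CJ.mk hE hM
            rw [hsz, ← hk1] at hres
            exact ⟨_, _, hres⟩
theorem EJ_merge : ∀ (e : Env) {Γ1 w1 n1 Γ2 w2 n2},
    EJ e Γ1 w1 n1 → EJ e Γ2 w2 n2 → ∃ w n, EJ e (Γ1.union Γ2) w n
  | .nil, Γ1, w1, n1, Γ2, w2, n2, h1, h2 => by
    cases h1
    cases h2
    exact ⟨0, 0, by rw [Ctx.empty_union]; exact EJ.nil⟩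
  | .cons x c e, Γ1, w1, n1, Γ2, w2, n2, h1, h2 => by
    cases h1 with
    | cons hx1 hC1 hE1 =>
      cases h2 with
      | cons hx2 hC2 hE2 =>
        obtain ⟨wc, nc, hC⟩ := CJ_merge c hC1 hC2
        obtain ⟨we, ne, hE⟩ := EJ_merge e hE1 hE2
        have hres := EJ.cons (Γ := (_ : Ctx).union _) (x := x)
          (by rw [Ctx.dom_union, Finset.mem_union]
              rintro (h | h)
              · exact hx1 h
              · exact hx2 h) hC hE
        rw [← Ctx.extend_union_extend hx1 hx2] at hres
        exact ⟨_, _, hres⟩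
end

theorem EJ_restrict_merge : ∀ (e : Env), e.WF →
    ∀ {V W : Finset ℕ} {Γ Δ : Ctx} {w1 n1 w2 n2 : ℕ},
    EJ (e.restrict V) Γ w1 n1 → EJ (e.restrict W) Δ w2 n2 →
    ∃ w n, EJ (e.restrict (V ∪ W)) (Γ.union Δ) w n := by
  intro e
  induction e using Env.inductionOn with
  | nil =>
    intro _ V W Γ Δ w1 n1 w2 n2 h1 h2
    rw [show Env.restrict .nil V = .nil from rfl] at h1
    rw [show Env.restrict .nil W = .nil from rfl] at h2
    cases h1; cases h2
    exact ⟨0, 0, by rw [Ctx.empty_union]; exact EJ.nil⟩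
  | cons y c e ih =>
    intro hwf V W Γ Δ w1 n1 w2 n2 h1 h2
    rw [Env.WF] at hwf
    obtain ⟨hy, hcwf, hewf⟩ := hwf
    rw [Env.restrict] at h1 h2 ⊢
    by_cases hyV : y ∈ V <;> by_cases hyW : y ∈ W
    · rw [if_pos hyV] at h1
      rw [if_pos hyW] at h2
      rw [if_pos (Finset.mem_union_left _ hyV)]
      cases h1 with
      | cons hx1 hC1 hE1 =>
        cases h2 with
        | cons hx2 hC2 hE2 =>
          obtain ⟨wc, nc, hC⟩ := CJ_merge c hC1 hC2
          obtain ⟨we, ne, hE⟩ := ih hewf hE1 hE2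
          have hres := EJ.cons (x := y)
            (by rw [Ctx.dom_union, Finset.mem_union]
                rintro (h | h)
                · exact hx1 h
                · exact hx2 h) hC hE
          rw [← Ctx.extend_union_extend hx1 hx2] at hres
          exact ⟨_, _, hres⟩
    · rw [if_pos hyV] at h1
      rw [if_neg hyW] at h2
      rw [if_pos (Finset.mem_union_left _ hyV)]
      cases h1 with
      | cons hx1 hC1 hE1 =>
        obtain ⟨we, ne, hE⟩ := ih hewf hE1 h2
        have hyΔ : y ∉ Δ.dom := by
          rw [EJ_dom h2, Env.dom_restrict]
          intro hmem
          exact hy (Finset.mem_inter.mp hmem).1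
        have hres := EJ.cons (x := y)
          (by rw [Ctx.dom_union, Finset.mem_union]
              rintro (h | h)
              · exact hx1 h
              · exact hyΔ h) hC1 hE
        rw [← Ctx.extend_union_left hx1 hyΔ] at hres
        exact ⟨_, _, hres⟩
    · rw [if_neg hyV] at h1
      rw [if_pos hyW] at h2
      rw [if_pos (Finset.mem_union_right _ hyW)]
      cases h2 with
      | cons hx2 hC2 hE2 =>
        obtain ⟨we, ne, hE⟩ := ih hewf h1 hE2
        have hyΓ : y ∉ Γ.dom := by
          rw [EJ_dom h1, Env.dom_restrict]
          intro hmem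
          exact hy (Finset.mem_inter.mp hmem).1
        have hres := EJ.cons (x := y)
          (by rw [Ctx.dom_union, Finset.mem_union]
              rintro (h | h)
              · exact hyΓ h
              · exact hx2 h) hC2 hE
        rw [← Ctx.union_extend_right hyΓ hx2] at hres
        exact ⟨_, _, hres⟩
    · rw [if_neg hyV] at h1
      rw [if_neg hyW] at h2
      rw [if_neg (by rw [Finset.mem_union]; rintro (h | h); exact hyV h; exact hyW h)]
      exact ih hewf h1 h2

mutual
theorem Clo.WF_dry : ∀ (c : Clo), c.WF → ∃ w n, CJ c (.mk [] c.size) w n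
  | .mk t e, h => by
    rw [Clo.WF] at h
    obtain ⟨Γ, w, n, hEJ, hdry⟩ := Env.WF_dry e h.1
    have hdom : Γ.dom = fv t := (EJ_dom hEJ).trans h.2
    have hmj : MJ Γ t (.mk [] (1 + Γ.size)) 0 0 := MJ.none hdry hdom
    have hsz : Γ.size = e.size := EJ_size e hEJ
    exact ⟨_, _, by
      rw [show Clo.size (.mk t e) = 1 + e.size from rfl, ← hsz]
      exact CJ.mk hEJ hmj⟩
theorem Env.WF_dry : ∀ (e : Env), e.WF → ∃ Γ w n, EJ e Γ w n ∧ Γ.Dry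
  | .nil, _ => ⟨Ctx.empty, 0, 0, EJ.nil, fun x hx => absurd hx (by simp [Ctx.dom_empty])⟩
  | .cons x c e, h => by
    rw [Env.WF] at h
    obtain ⟨hx, hc, he⟩ := h
    obtain ⟨w, n, hCJ⟩ := Clo.WF_dry c hc
    obtain ⟨Γ, w', n', hEJ, hdry⟩ := Env.WF_dry e he
    have hxd : x ∉ Γ.dom := by rw [EJ_dom hEJ]; exact hx
    refine ⟨Γ.extend x (.mk [] c.size), _, _, EJ.cons hxd hCJ hEJ, ?_⟩
    intro y hy
    rw [Ctx.dom_extend, Finset.mem_insert] at hy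
    by_cases hyx : y = x
    · subst hyx
      refine ⟨c.size, c.size_pos, ?_⟩
      show Function.update Γ.ty y _ y = _
      rw [Function.update_self]
    · obtain ⟨k, hk, hty⟩ := hdry y (hy.resolve_left hyx)
      refine ⟨k, hk, ?_⟩
      show Function.update Γ.ty x _ y = _
      rw [Function.update_of_ne hyx]
      exact hty
end


/-! ### Typability of final states -/

theorem final_typable {s : State} (hwf : s.WF) (hf : Final s) :
    ∃ w n, StJ s w n := by
  obtain ⟨t, e, S⟩ := s
  obtain ⟨hwe, hdom, hstk⟩ := hwf
  cases t with
  | var x =>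
    exfalso
    have hx : x ∈ e.dom := by rw [hdom]; simp [fv]
    obtain ⟨c, hc⟩ := Env.lookup_of_mem_dom hx
    cases c with
    | mk u e' => exact hf _ (SpKAM.sub hc)
  | app t u =>
    exfalso
    cases u with
    | var x =>
      have hx : x ∈ e.dom := by
        rw [hdom]
        show x ∈ fv t ∪ fv (.var x)
        simp [fv]
      obtain ⟨c, hc⟩ := Env.lookup_of_mem_dom hx
      exact hf _ (SpKAM.sea_v hc)
    | lam y u' => exact hf _ (SpKAM.sea_nv (fun y => by simp))
    | app u1 u2 => exact hf _ (SpKAM.sea_nv (fun y => by simp))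
  | lam x t =>
    cases S with
    | cons c S' =>
      exfalso
      by_cases hx : x ∈ fv t
      · exact hf _ (SpKAM.beta_nw hx)
      · exact hf _ (SpKAM.beta_w hx)
    | nil =>
      obtain ⟨Γ, w, n, hEJ, hdry⟩ := Env.WF_dry e hwe
      have hdomΓ : Γ.dom = fv (.lam x t) := (EJ_dom hEJ).trans hdom
      exact ⟨_, _, StJ.mk (TJ.lamStar hdry hdomΓ) hEJ SJ.nil⟩

/-! ### Subject expansion -/

theorem subject_expansion {s s' : State} (h : SpKAM s s') (hwf : s.WF)
    (hty : ∃ w n, StJ s' w n) : ∃ w n, StJ s w n := by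
  obtain ⟨w0, n0, hst⟩ := hty
  obtain ⟨hwe, hdom, hstk⟩ := hwf
  cases h with
  | @sea_v t x e S c hl =>
    have hdom' : e.dom = fv t ∪ {x} := by
      rw [hdom]; show _ = fv t ∪ fv (.var x); rfl
    cases hst with
    | @mk _ _ _ Γ A w u v n m p hTJ hEJ hSJ =>
      cases hSJ with
      | @cons _ M _ B wc vc nc mc hCJ hSJ' =>
        -- Γ has domain fv t
        have hdomΓ : Γ.dom = fv t := by
          rw [EJ_dom hEJ, Env.dom_restrict, hdom']
          ext z
          simp only [Finset.mem_inter, Finset.mem_union, Finset.mem_singleton]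
          tauto
        have hMidx : M.idx = c.size := CJ_idx c hCJ
        have hsum : Γ.Summable (Ctx.single x M) := by
          intro z hz
          rw [Finset.mem_inter, Ctx.dom_single, Finset.mem_singleton] at hz
          obtain ⟨hz1, rfl⟩ := hz
          have hz2 : z ∈ (e.restrict (fv t)).dom := by
            rw [Env.dom_restrict, hdom', hdomΓ] at *
            rw [Finset.mem_inter]
            exact ⟨Finset.mem_union_left _ hz1, hz1⟩
          obtain ⟨c', hl', hidx⟩ := EJ_lookup_idx hEJ z hz2
          rw [Env.lookup_restrict (hdomΓ ▸ hz1)] at hl'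
          rw [hl] at hl'
          cases hl'
          rw [hidx, show (Ctx.single z M).ty z = M by simp [Ctx.single], hMidx]
        have hTJ' := TJ.app2 hsum hTJ
        -- environment typing
        have hE2 : EJ (e.restrict {x}) (Ctx.single x M) wc nc := by
          rw [Env.restrict_singleton hwe hl, ← Ctx.empty_extend]
          have := EJ.cons (e := .nil) (x := x) (by simp [Ctx.dom_empty]) hCJ EJ.nil
          simpa using this
        obtain ⟨we, ne, hE⟩ := EJ_restrict_merge e hwe hEJ hE2
        rw [Env.restrict_eq_self (by rw [hdom'])] at hE
        exact ⟨_, _, StJ.mk hTJ' hE hSJ'⟩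
  | @sea_nv t u e S hnv =>
    have hdom' : e.dom = fv t ∪ fv u := hdom
    cases hst with
    | @mk _ _ _ Γ A w uu v n m p hTJ hEJ hSJ =>
      cases hSJ with
      | @cons _ M _ B wc vc nc mc hCJ hSJ' =>
        cases hCJ with
        | @mk _ _ Δ _ wd vd nd md hEΔ hMJ =>
          have hdomΓ : Γ.dom = e.dom ∩ fv t := by rw [EJ_dom hEJ, Env.dom_restrict]
          have hdomΔ : Δ.dom = e.dom ∩ fv u := by rw [EJ_dom hEΔ, Env.dom_restrict]
          have hsum : Γ.Summable Δ := by
            intro z hz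
            rw [Finset.mem_inter, hdomΓ, hdomΔ] at hz
            obtain ⟨hz1, hz2⟩ := hz
            rw [Finset.mem_inter] at hz1 hz2
            obtain ⟨c1, hl1, hidx1⟩ := EJ_lookup_idx hEJ z
              (by rw [Env.dom_restrict, Finset.mem_inter]; exact ⟨hz1.1, hz1.2⟩)
            obtain ⟨c2, hl2, hidx2⟩ := EJ_lookup_idx hEΔ z
              (by rw [Env.dom_restrict, Finset.mem_inter]; exact ⟨hz2.1, hz2.2⟩)
            rw [Env.lookup_restrict hz1.2] at hl1
            rw [Env.lookup_restrict hz2.2] at hl2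
            rw [hl1] at hl2
            cases hl2
            rw [hidx1, hidx2]
          have hTJ' := TJ.app1 hsum hTJ hMJ
          obtain ⟨we, ne, hE⟩ := EJ_restrict_merge e hwe hEJ hEΔ
          rw [Env.restrict_eq_self (by rw [hdom'])] at hE
          exact ⟨_, _, StJ.mk hTJ' hE hSJ'⟩
  | @beta_w x t e c S hx =>
    cases hst with
    | @mk _ _ _ Γ A w u v n m p hTJ hEJ hSJ =>
      have hxΓ : x ∉ Γ.dom := by
        rw [EJ_dom hEJ, hdom]
        show x ∉ fv t \ {x}
        simp
      have hcwf : c.WF := hstk c (by simp)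
      obtain ⟨wc, nc, hCJ⟩ := Clo.WF_dry c hcwf
      exact ⟨_, _, StJ.mk (TJ.lam2 hxΓ c.size_pos hTJ) hEJ (SJ.cons hCJ hSJ)⟩
  | @beta_nw x t e c S hx =>
    cases hst with
    | @mk _ _ _ Γ A w u v n m p hTJ hEJ hSJ =>
      cases hEJ with
      | @cons _ Γ' _ _ M wc vc nc mc hxΓ hCJ hE =>
        exact ⟨_, _, StJ.mk (TJ.lam1 hxΓ hTJ) hE (SJ.cons hCJ hSJ)⟩
  | @sub x e e' u S hl =>
    cases hst with
    | @mk _ _ _ Δ A w uu v n m p hTJ hEJ hSJ =>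
      have hMJ := MJ.one hTJ
      have hCJ := CJ.mk hEJ hMJ
      have hTJ' := TJ.var (x := x) (A := A) (k := 1 + Δ.size) (by omega)
      have he : e = .cons x (.mk u e') .nil := by
        rw [← Env.restrict_singleton hwe hl]
        exact (Env.restrict_eq_self (by rw [hdom]; exact Finset.Subset.refl _)).symm
      have hE := EJ.cons (e := .nil) (x := x) (by simp [Ctx.dom_empty]) hCJ EJ.nil
      rw [Ctx.empty_extend, ← he] at hE
      exact ⟨_, _, StJ.mk hTJ' hE hSJ⟩

/-- completeness on states: reachable states from which the
Space KAM reaches a final state are typable with `⋆`. -/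
theorem completeness_on_states {s sf : State} (hr : Reachable s)
    (hrun : Relation.ReflTransGen SpKAM s sf) (hf : Final sf) :
    ∃ w n, StJ s w n := by
  have hwf := WF_reachable hr
  clear hr
  revert hwf
  induction hrun using Relation.ReflTransGen.head_induction_on with
  | refl => exact fun hwf => final_typable hwf hf
  | head hstep _ ih =>
    exact fun hwf => subject_expansion hstep hwf (ih (WF_step hstep hwf))
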